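/- There exists ε₀ > 0 such that for every 0 < ε < ε₀ and every point (x,y) ∈ R_ε with u_ε(x,y) = 0 one has (x − x₁) ∂u_ε/∂x (x,y) + y ∂u_ε/∂y (x,y) ≤ −1/2. -/

import Mathlib

open Set Filter Topology

/-- The holomorphic function `F(z) = -∏ (z - xᵢ)`. -/
noncomputable def FF (k : ℕ) (x : Fin (2*k) → ℝ) (z : ℂ) : ℂ :=
  -∏ i, (z - (x i : ℂ))

/-- `v(x,y) = Re F(x + iy)`, a harmonic function. -/
noncomputable def vv (k : ℕ) (x : Fin (2*k) → ℝ) (p : ℝ × ℝ) : ℝ :=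
  (FF k x ((p.1 : ℂ) + (p.2 : ℂ) * Complex.I)).re

/-- The restriction `f` of `F` to the real line. -/
noncomputable def ff (k : ℕ) (x : Fin (2*k) → ℝ) (t : ℝ) : ℝ :=
  (FF k x (t : ℂ)).re

/-- `u_ε(x,y) = 1/2 - y²/2 + ε (y³ - 3 x² y) + ε^{3/2} v(x,y)`. -/
noncomputable def uu (k : ℕ) (x : Fin (2*k) → ℝ) (ε : ℝ) (p : ℝ × ℝ) : ℝ :=
  1/2 - p.2^2/2 + ε * (p.2^3 - 3*p.1^2*p.2) + ε ^ ((3:ℝ)/2) * vv k x p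

/-- `x_ε = (3 ε^{-3/2})^{1/(2k)}`. -/
noncomputable def xeps (k : ℕ) (ε : ℝ) : ℝ :=
  (3 * ε ^ (-(3:ℝ)/2)) ^ ((1:ℝ)/(2*k))

/-- `Ω_ε`: the connected component of `{u_ε > 0}` containing `(x₁, 0)`. -/
noncomputable def Omeg (k : ℕ) (hk : 2 ≤ k) (x : Fin (2*k) → ℝ) (ε : ℝ) : Set (ℝ × ℝ) :=
  connectedComponentIn {p : ℝ × ℝ | 0 < uu k x ε p} (x ⟨0, by omega⟩, 0)

/-- partial derivative in the first variable. -/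
noncomputable def px (g : ℝ × ℝ → ℝ) (p : ℝ × ℝ) : ℝ :=
  deriv (fun t => g (t, p.2)) p.1

/-- partial derivative in the second variable. -/
noncomputable def py (g : ℝ × ℝ → ℝ) (p : ℝ × ℝ) : ℝ :=
  deriv (fun t => g (p.1, t)) p.2

/-- `N_u = u_xx u_y² - 2 u_xy u_x u_y + u_yy u_x²`. -/
noncomputable def NN (g : ℝ × ℝ → ℝ) (p : ℝ × ℝ) : ℝ :=
  px (px g) p * (py g p)^2 - 2 * py (px g) p * px g p * py g p + py (py g) p * (px g p)^2

/-- Oriented curvature of a level curve of `g`. -/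
noncomputable def CurvU (g : ℝ × ℝ → ℝ) (p : ℝ × ℝ) : ℝ :=
  -(NN g p) / ((px g p)^2 + (py g p)^2) ^ ((3:ℝ)/2)

/-!
For `z = x + i y` the Cauchy–Riemann equations give the exact identity
`(x - x₁) ∂ₓu_ε + y ∂ᵧu_ε = 2 u_ε - 1 + ε (y³ + 6 x₁ x y - 3 x² y) + ε^{3/2} Re ((z - x₁) F'(z) - 2 F(z))`,
and on the zero set of `u_ε` the first term drops out. On `R_ε` the cubic term is
`O(ε x_ε²) = O(ε^{1 - 3/(2k)})`, which tends to `0` because `k ≥ 2`. The polynomial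
`(z - x₁) F' - 2 F` has even degree `2k` and leading coefficient `-(2k - 2) ≤ 0`, so its real part
is `O((1 + |z|)^{2k-1})` on the strip `|y| ≤ 2`; as `ε^{3/2} x_ε^{2k} = 3`, the last term is
`O(1 / x_ε)`. Both are below `1/4` for small `ε`.
-/

open Polynomial Complex

lemma Polynomial.norm_eval_le_of_natDegree_le {R : Type*} [NormedRing R] [NormOneClass R]
    {p : R[X]} {n : ℕ} (hp : p.natDegree ≤ n) (z : R) :
    ‖p.eval z‖ ≤ (∑ i ∈ Finset.range (n + 1), ‖p.coeff i‖) * (1 + ‖z‖) ^ n := by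
  rw [eval_eq_sum_range' (Nat.lt_succ_of_le hp), Finset.sum_mul]
  refine (norm_sum_le _ _).trans (Finset.sum_le_sum fun i hi => ?_)
  have hi : i ≤ n := Nat.lt_succ_iff.mp (Finset.mem_range.mp hi)
  calc ‖p.coeff i * z ^ i‖ ≤ ‖p.coeff i‖ * ‖z‖ ^ i :=
        (norm_mul_le _ _).trans (mul_le_mul_of_nonneg_left (norm_pow_le _ _) (norm_nonneg _))
    _ ≤ ‖p.coeff i‖ * (1 + ‖z‖) ^ n := by
        gcongr
        calc ‖z‖ ^ i ≤ (1 + ‖z‖) ^ i := by gcongr; linarith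
          _ ≤ (1 + ‖z‖) ^ n := pow_le_pow_right₀ (by linarith [norm_nonneg z]) hi

lemma RCLike.norm_pow_sub_pow_le {𝕜 : Type*} [RCLike 𝕜] (n : ℕ) {z w : 𝕜} {M : ℝ}
    (hz : ‖z‖ ≤ M) (hw : ‖w‖ ≤ M) : ‖z ^ n - w ^ n‖ ≤ n * M ^ (n - 1) * ‖z - w‖ := by
  refine (convex_closedBall (0 : 𝕜) M).norm_image_sub_le_of_norm_hasDerivWithin_le
    (fun v _ => (hasDerivAt_pow n v).hasDerivWithinAt) (fun v hv => ?_)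
    (mem_closedBall_zero_iff.mpr hw) (mem_closedBall_zero_iff.mpr hz)
  rw [norm_mul, norm_pow, RCLike.norm_natCast]
  gcongr
  exact mem_closedBall_zero_iff.mp hv

lemma Complex.neg_le_re_pow {n : ℕ} (hn : Even n) (z : ℂ) :
    -(n * ‖z‖ ^ (n - 1) * |z.im|) ≤ (z ^ n).re := by
  have hre : ‖(z.re : ℂ)‖ ≤ ‖z‖ := by simpa using Complex.abs_re_le_norm z
  have hdiff := RCLike.norm_pow_sub_pow_le n le_rfl hre
  rw [show z - z.re = z.im * I by simp [Complex.ext_iff]] at hdiff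
  have hpow : ((z.re : ℂ) ^ n).re = z.re ^ n := by norm_cast
  calc -(n * ‖z‖ ^ (n - 1) * |z.im|) ≤ -‖z ^ n - (z.re : ℂ) ^ n‖ := by simpa using hdiff
    _ ≤ (z ^ n - (z.re : ℂ) ^ n).re := neg_le_of_abs_le (Complex.abs_re_le_norm _)
    _ ≤ (z ^ n).re := by rw [Complex.sub_re, hpow]; linarith [hn.pow_nonneg z.re]

lemma Polynomial.exists_re_eval_le {p : ℂ[X]} {n : ℕ} (hn : Even (n + 1))
    (hp : p.natDegree ≤ n + 1) {c : ℝ} (hc : 0 ≤ c) (hlead : p.coeff (n + 1) = -c) (B : ℝ) :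
    ∃ C, 0 ≤ C ∧ ∀ z : ℂ, |z.im| ≤ B → (p.eval z).re ≤ C * (1 + ‖z‖) ^ n := by
  set q := p + C (c : ℂ) * X ^ (n + 1)
  have hq : q.natDegree ≤ n := by
    refine natDegree_le_iff_coeff_eq_zero.mpr fun i hi => ?_
    rcases (Nat.succ_le_of_lt hi).eq_or_lt with rfl | hi'
    · simp [q, hlead]
    · simp [q, coeff_eq_zero_of_natDegree_lt (hp.trans_lt hi'), coeff_X_pow, hi'.ne']
  set S := ∑ i ∈ Finset.range (n + 1), ‖q.coeff i‖
  refine ⟨S + c * (n + 1) * |B|, by positivity, fun z hz => ?_⟩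
  have hpq : p.eval z = q.eval z - c * z ^ (n + 1) := by simp [q]
  have hpow := Complex.neg_le_re_pow hn z
  have hnorm : ‖z‖ ^ n ≤ (1 + ‖z‖) ^ n := by gcongr; linarith
  have him : |z.im| ≤ |B| := hz.trans (le_abs_self B)
  calc (p.eval z).re = (q.eval z).re - c * (z ^ (n + 1)).re := by
        rw [hpq, Complex.sub_re, Complex.re_ofReal_mul]
    _ ≤ ‖q.eval z‖ + c * ((n + 1) * ‖z‖ ^ n * |z.im|) := by
        push_cast at hpow
        have := mul_le_mul_of_nonneg_left hpow hc
        linarith [Complex.re_le_norm (q.eval z)]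
    _ ≤ S * (1 + ‖z‖) ^ n + c * ((n + 1) * (1 + ‖z‖) ^ n * |B|) := by
        gcongr
        exact norm_eval_le_of_natDegree_le hq z
    _ = (S + c * (n + 1) * |B|) * (1 + ‖z‖) ^ n := by ring

section

variable {R : Type*} [CommRing R] {p : R[X]} {n : ℕ}

lemma Polynomial.coeff_X_sub_C_mul_derivative_sub (p : R[X]) (a m : R) (n : ℕ) :
    ((X - C a) * derivative p - C m * p).coeff n
      = (n - m) * p.coeff n - a * (n + 1) * p.coeff (n + 1) := by
  rcases n with _ | n
  · simp only [sub_mul, coeff_sub, coeff_X_mul_zero, coeff_C_mul, coeff_derivative]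
    push_cast; ring
  · simp only [sub_mul, coeff_sub, coeff_X_mul, coeff_C_mul, coeff_derivative]
    push_cast; ring

lemma Polynomial.natDegree_X_sub_C_mul_derivative_sub_le (hp : p.natDegree ≤ n) (a m : R) :
    ((X - C a) * derivative p - C m * p).natDegree ≤ n := by
  refine natDegree_le_iff_coeff_eq_zero.mpr fun i hi => ?_
  rw [coeff_X_sub_C_mul_derivative_sub, coeff_eq_zero_of_natDegree_lt (hp.trans_lt hi),
    coeff_eq_zero_of_natDegree_lt (hp.trans_lt (hi.trans (Nat.lt_succ_self i)))]
  ring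

end

section

variable {g : ℂ → ℂ} {a b : ℝ}

lemma hasDerivAt_re_comp_horizontal (hg : DifferentiableAt ℂ g (a + b * I)) :
    HasDerivAt (fun t : ℝ => (g (t + b * I)).re) (deriv g (a + b * I)).re a :=
  (hg.hasDerivAt.comp_add_const (a : ℂ) (b * I)).real_of_complex

lemma hasDerivAt_re_comp_vertical (hg : DifferentiableAt ℂ g (a + b * I)) :
    HasDerivAt (fun t : ℝ => (g (a + t * I)).re) (-(deriv g (a + b * I)).im) b := by
  have hline : HasDerivAt (fun w : ℂ => a + w * I) I b := by
    simpa using ((hasDerivAt_id (b : ℂ)).mul_const I).const_add (a : ℂ)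
  simpa using (hg.hasDerivAt.comp (b : ℂ) hline).real_of_complex

end

lemma cubic_le_mul_sq {a s t r : ℝ} (hr : 1 ≤ r) (hs : |s| ≤ r) (ht : |t| ≤ 2) :
    t ^ 3 + 6 * a * s * t - 3 * s ^ 2 * t ≤ (14 + 12 * |a|) * r ^ 2 := by
  have hs2 : s ^ 2 ≤ r ^ 2 := sq_le_sq' (abs_le.mp hs).1 (abs_le.mp hs).2
  have ht3 : t ^ 3 ≤ 8 := by nlinarith [abs_le.mp ht, sq_nonneg t]
  have hast : a * s * t ≤ |a| * (r * 2) := by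
    rw [mul_assoc]
    refine (le_abs_self _).trans ?_
    rw [abs_mul, abs_mul]
    gcongr
  have hst : -(s ^ 2 * t) ≤ 2 * s ^ 2 := by nlinarith [abs_le.mp ht, sq_nonneg s]
  have hr2 : r ≤ r ^ 2 := by nlinarith
  have har : |a| * r ≤ |a| * r ^ 2 := mul_le_mul_of_nonneg_left hr2 (abs_nonneg a)
  linarith

section

variable {k : ℕ} {x : Fin (2 * k) → ℝ} {ε : ℝ}

noncomputable def polyF (k : ℕ) (x : Fin (2 * k) → ℝ) : ℂ[X] := -∏ i, (X - C (x i : ℂ))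

lemma eval_polyF (z : ℂ) : (polyF k x).eval z = FF k x z := by
  simp [polyF, FF, eval_prod]

lemma natDegree_polyF : (polyF k x).natDegree = 2 * k := by
  simp [polyF]

lemma coeff_polyF : (polyF k x).coeff (2 * k) = -1 := by
  have hmonic : (∏ i, (X - C (x i : ℂ))).Monic := monic_prod_of_monic _ _ fun i _ => monic_X_sub_C _
  have := hmonic.coeff_natDegree
  simp_all [polyF]

lemma differentiable_FF : Differentiable ℂ (FF k x) := by
  unfold FF; fun_prop

lemma deriv_FF (z : ℂ) : deriv (FF k x) z = (derivative (polyF k x)).eval z := by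
  rw [show FF k x = fun w => (polyF k x).eval w from funext fun w => (eval_polyF w).symm,
    Polynomial.deriv]

lemma px_uu (ε : ℝ) (p : ℝ × ℝ) :
    px (uu k x ε) p = ε * (-6 * p.1 * p.2)
      + ε ^ ((3:ℝ)/2) * (deriv (FF k x) (p.1 + p.2 * I)).re := by
  have hv := hasDerivAt_re_comp_horizontal (differentiable_FF (k := k) (x := x) (p.1 + p.2 * I))
  have hq : HasDerivAt (fun t : ℝ => 1/2 - p.2^2/2 + ε * (p.2^3 - 3*t^2*p.2))
      (ε * (-6 * p.1 * p.2)) p.1 :=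
    ((((hasDerivAt_pow 2 p.1).const_mul 3).mul_const p.2).const_sub (p.2^3)).const_mul ε
      |>.const_add (1/2 - p.2^2/2) |>.congr_deriv (by ring)
  exact (hq.add (hv.const_mul _)).deriv

lemma py_uu (ε : ℝ) (p : ℝ × ℝ) :
    py (uu k x ε) p = -p.2 + ε * (3 * p.2^2 - 3 * p.1^2)
      - ε ^ ((3:ℝ)/2) * (deriv (FF k x) (p.1 + p.2 * I)).im := by
  have hv := hasDerivAt_re_comp_vertical (differentiable_FF (k := k) (x := x) (p.1 + p.2 * I))
  have hq : HasDerivAt (fun t : ℝ => 1/2 - t^2/2 + ε * (t^3 - 3*p.1^2*t))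
      (-p.2 + ε * (3 * p.2^2 - 3 * p.1^2)) p.2 :=
    (((hasDerivAt_pow 2 p.2).div_const 2).const_sub (1/2)).add
      (((hasDerivAt_pow 3 p.2).sub ((hasDerivAt_id p.2).const_mul (3*p.1^2))).const_mul ε)
      |>.congr_deriv (by ring)
  rw [sub_eq_add_neg, ← mul_neg]
  exact (hq.add (hv.const_mul _)).deriv

lemma euler_combination_uu (ε a : ℝ) (p : ℝ × ℝ) :
    (p.1 - a) * px (uu k x ε) p + p.2 * py (uu k x ε) p
      = 2 * uu k x ε p - 1 + ε * (p.2^3 + 6 * a * p.1 * p.2 - 3 * p.1^2 * p.2)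
        + ε ^ ((3:ℝ)/2) * (((p.1 + p.2 * I) - a) * deriv (FF k x) (p.1 + p.2 * I)
          - 2 * FF k x (p.1 + p.2 * I)).re := by
  simp only [px_uu, py_uu, uu, vv, sub_re, mul_re, ofReal_re, ofReal_im, add_re, I_re, I_im,
    sub_im, add_im, mul_im, re_ofNat, im_ofNat]
  ring

lemma exists_re_euler_FF_le (a : ℝ) {m : ℕ} (hm : 2 * k = m + 1) :
    ∃ C, 0 ≤ C ∧ ∀ z : ℂ, |z.im| ≤ 2 →
      ((z - a) * deriv (FF k x) z - 2 * FF k x z).re ≤ C * (1 + ‖z‖) ^ m := by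
  have hdeg : (polyF k x).natDegree ≤ m + 1 := hm ▸ natDegree_polyF.le
  have hlead : ((X - C (a : ℂ)) * derivative (polyF k x) - C 2 * polyF k x).coeff (m + 1)
      = -(((m : ℝ) - 1 : ℝ) : ℂ) := by
    rw [coeff_X_sub_C_mul_derivative_sub, ← hm, coeff_polyF,
      coeff_eq_zero_of_natDegree_lt (natDegree_polyF.trans_lt (by omega))]
    have hmC : (2 * k : ℂ) = m + 1 := by exact_mod_cast hm
    push_cast
    linear_combination -hmC
  have hm1 : (1 : ℝ) ≤ m := by exact_mod_cast (show 1 ≤ m by omega)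
  obtain ⟨C, hC0, hC⟩ := exists_re_eval_le (hm ▸ even_two_mul k)
    (natDegree_X_sub_C_mul_derivative_sub_le hdeg _ _) (sub_nonneg.mpr hm1) hlead 2
  refine ⟨C, hC0, fun z hz => ?_⟩
  simpa [eval_polyF, deriv_FF] using hC z hz

lemma xeps_pow (hε : 0 < ε) (n : ℕ) :
    xeps k ε ^ n = (3 * ε ^ (-(3:ℝ)/2)) ^ ((n : ℝ) / (2 * k)) := by
  rw [xeps, ← Real.rpow_natCast, ← Real.rpow_mul (by positivity)]
  ring_nf

lemma rpow_mul_xeps_pow (hk : k ≠ 0) (hε : 0 < ε) : ε ^ ((3:ℝ)/2) * xeps k ε ^ (2 * k) = 3 := by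
  rw [xeps_pow hε, show ((2 * k : ℕ) : ℝ) / (2 * k) = 1 by field_simp; push_cast; ring,
    Real.rpow_one, neg_div, Real.rpow_neg hε.le]
  field_simp

lemma mul_xeps_sq (hε : 0 < ε) :
    ε * xeps k ε ^ 2 = 3 ^ ((1:ℝ) / k) * ε ^ (1 - 3 / (2 * k : ℝ)) := by
  rw [xeps_pow hε, Real.mul_rpow (by norm_num) (by positivity), ← Real.rpow_mul hε.le,
    mul_left_comm, mul_comm ε, ← Real.rpow_add_one hε.ne']
  congr 2 <;> push_cast <;> ring

lemma tendsto_xeps (hk : k ≠ 0) : Tendsto (xeps k) (𝓝[>] 0) atTop :=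
  (tendsto_rpow_atTop (by positivity)).comp
    ((tendsto_rpow_neg_nhdsGT_zero (by norm_num)).const_mul_atTop three_pos)

lemma tendsto_mul_xeps_sq (hk : 2 ≤ k) :
    Tendsto (fun ε => ε * xeps k ε ^ 2) (𝓝[>] 0) (𝓝 0) := by
  have hexp : 0 < 1 - 3 / (2 * k : ℝ) := by
    have : (4 : ℝ) ≤ 2 * k := by norm_cast; omega
    rw [sub_pos, div_lt_one (by linarith)]; linarith
  have hlim : Tendsto (fun ε : ℝ => 3 ^ ((1:ℝ) / k) * ε ^ (1 - 3 / (2 * k : ℝ))) (𝓝[>] 0) (𝓝 0) := by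
    have := ((Real.continuousAt_rpow_const 0 _ (Or.inr hexp.le)).tendsto.const_mul
      (3 ^ ((1:ℝ) / k))).mono_left (nhdsWithin_le_nhds (s := Ioi 0))
    rwa [Real.zero_rpow hexp.ne', mul_zero] at this
  refine hlim.congr' ?_
  filter_upwards [self_mem_nhdsWithin] with ε hε
  exact (mul_xeps_sq hε).symm

lemma rpow_mul_one_add_pow_le {m : ℕ} (hm : 2 * k = m + 1) (hε : 0 < ε) (hr : 1 ≤ xeps k ε)
    {s : ℝ} (hs0 : 0 ≤ s) (hs : s ≤ xeps k ε + 2) :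
    ε ^ ((3:ℝ)/2) * (1 + s) ^ m ≤ 4 ^ m * 3 / xeps k ε := by
  have hr0 : 0 < xeps k ε := by linarith
  have hscale : ε ^ ((3:ℝ)/2) * xeps k ε ^ m = 3 / xeps k ε := by
    rw [eq_div_iff hr0.ne', mul_assoc, ← pow_succ, ← hm, rpow_mul_xeps_pow (by omega) hε]
  calc ε ^ ((3:ℝ)/2) * (1 + s) ^ m ≤ ε ^ ((3:ℝ)/2) * (4 * xeps k ε) ^ m := by
        gcongr; linarith
    _ = 4 ^ m * 3 / xeps k ε := by rw [mul_pow, mul_left_comm, hscale, mul_div_assoc]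

lemma exists_rpow_mul_re_euler_FF_le (hk : k ≠ 0) (a : ℝ) :
    ∃ C, ∀ ε, 0 < ε → 1 ≤ xeps k ε → ∀ z : ℂ, |z.im| ≤ 2 → ‖z‖ ≤ xeps k ε + 2 →
      ε ^ ((3:ℝ)/2) * ((z - a) * deriv (FF k x) z - 2 * FF k x z).re ≤ C / xeps k ε := by
  obtain ⟨m, hm⟩ : ∃ m, 2 * k = m + 1 := ⟨2 * k - 1, by omega⟩
  obtain ⟨C, hC0, hC⟩ := exists_re_euler_FF_le (x := x) a hm
  refine ⟨C * 4 ^ m * 3, fun ε hε hr z hzim hz => ?_⟩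
  calc _ ≤ ε ^ ((3:ℝ)/2) * (C * (1 + ‖z‖) ^ m) := by
        gcongr
        exact hC z hzim
    _ = C * (ε ^ ((3:ℝ)/2) * (1 + ‖z‖) ^ m) := by ring
    _ ≤ C * (4 ^ m * 3 / xeps k ε) := by
        gcongr
        exact rpow_mul_one_add_pow_le hm hε hr (norm_nonneg _) hz
    _ = C * 4 ^ m * 3 / xeps k ε := by ring

end

theorem stmt6 (k : ℕ) (hk : 2 ≤ k) (x : Fin (2*k) → ℝ)
    (h : ℝ) (hh : h ∈ Set.Ioo (0:ℝ) 1) :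
    ∃ ε₀ > (0:ℝ), ∀ ε : ℝ, 0 < ε → ε < ε₀ →
      ∀ p : ℝ × ℝ,
        p ∈ Set.Icc (-(xeps k ε)) (xeps k ε) ×ˢ Set.Icc (-(1+h)) (1+h) →
        uu k x ε p = 0 →
        (p.1 - x ⟨0, by omega⟩) * px (uu k x ε) p + p.2 * py (uu k x ε) p ≤ -(1/2) := by
  set a := x ⟨0, by omega⟩
  obtain ⟨C, hC⟩ := exists_rpow_mul_re_euler_FF_le (x := x) (by omega) a
  have hsmall : ∀ᶠ ε in 𝓝[>] 0,
      max 1 (4 * C) ≤ xeps k ε ∧ (14 + 12 * |a|) * (ε * xeps k ε ^ 2) < 1 / 4 :=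
    ((tendsto_xeps (by omega)).eventually_ge_atTop _).and
      (((tendsto_mul_xeps_sq hk).const_mul _).eventually_lt_const (by norm_num))
  obtain ⟨ε₀, hε₀, hsub⟩ := mem_nhdsGT_iff_exists_Ioo_subset.mp hsmall
  refine ⟨ε₀, hε₀, fun ε hε hεε₀ p ⟨⟨hx₁, hx₂⟩, hy₁, hy₂⟩ hu => ?_⟩
  obtain ⟨hr, hsq⟩ := hsub ⟨hε, hεε₀⟩
  have hr1 : 1 ≤ xeps k ε := le_of_max_le_left hr
  have hs : |p.1| ≤ xeps k ε := abs_le.mpr ⟨hx₁, hx₂⟩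
  have ht : |p.2| ≤ 2 := abs_le.mpr ⟨by linarith [hh.2], by linarith [hh.2]⟩
  have hcubic := mul_le_mul_of_nonneg_left (cubic_le_mul_sq (a := a) hr1 hs ht) hε.le
  have hharmonic := hC ε hε hr1 (p.1 + p.2 * I) (by simpa using ht)
    ((norm_add_le _ _).trans (by simpa using add_le_add hs ht))
  have hCr : C / xeps k ε ≤ 1 / 4 := by
    rw [div_le_iff₀ (by linarith)]
    linarith [le_of_max_le_right hr]
  rw [euler_combination_uu, hu]
  linarith
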